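/- Let ε₁, ε₂, ε₃, ε₄, a, b be complex numbers with ε₁+ε₂+ε₃+ε₄ = 0, generic so that all sh-factors below are nonzero, where sh(t) = e^{t/2} − e^{−t/2}. Define the prefactor P = sh(−ε₁−ε₄)·sh(−ε₂−ε₄)·sh(−ε₃−ε₄) / (sh(−ε₁)·sh(−ε₂)·sh(−ε₃)·sh(−ε₄)) and the function F(φ) = [sh(b−φ) / sh(a−ε₃−φ)] · ∏_{i∈{1,2,4}} sh(φ−a+ε₃+ε_i) / sh(φ−a−ε_i). Then −P · lim_{φ→a−ε₃} (φ − (a−ε₃)) · F(φ) = sh(b−a+ε₃) / sh(ε₃). -/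

import Mathlib

open Filter Topology

/-- `sh x = 2 sinh(x/2) = e^{x/2} - e^{-x/2}`. -/
noncomputable def sh (x : ℂ) : ℂ := Complex.exp (x / 2) - Complex.exp (-x / 2)

/-- The standard one-instanton prefactor
`P = sh(-ε₁₄) sh(-ε₂₄) sh(-ε₃₄) / (sh(-ε₁) sh(-ε₂) sh(-ε₃) sh(-ε₄))`. -/
noncomputable def pref (ε₁ ε₂ ε₃ ε₄ : ℂ) : ℂ :=
  sh (-ε₁ - ε₄) * sh (-ε₂ - ε₄) * sh (-ε₃ - ε₄) /
    (sh (-ε₁) * sh (-ε₂) * sh (-ε₃) * sh (-ε₄))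

@[fun_prop] lemma sh_continuous : Continuous sh := by
  unfold sh
  fun_prop

lemma sh_zero : sh 0 = 0 := by simp [sh]

lemma sh_neg (x : ℂ) : sh (-x) = -sh x := by
  show Complex.exp (-x / 2) - Complex.exp (- -x / 2) = _
  rw [neg_neg]
  unfold sh
  ring

lemma sh_hasDeriv : HasDerivAt sh 1 0 := by
  have h1 : HasDerivAt (fun x : ℂ => Complex.exp (x / 2)) (Complex.exp (0 / 2) * (1 / 2)) 0 :=
    ((hasDerivAt_id (0 : ℂ)).div_const 2).cexp
  have h2 : HasDerivAt (fun x : ℂ => Complex.exp (-x / 2)) (Complex.exp (-0 / 2) * (-1 / 2)) 0 :=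
    (((hasDerivAt_id (0 : ℂ)).neg).div_const 2).cexp
  have := h1.sub h2
  show HasDerivAt ((fun x : ℂ => Complex.exp (x / 2)) - fun x : ℂ => Complex.exp (-x / 2)) 1 0
  exact this.congr_deriv (by norm_num)

lemma div_sh_tendsto : Tendsto (fun t : ℂ => t / sh t) (𝓝[≠] 0) (𝓝 1) := by
  have h := hasDerivAt_iff_tendsto_slope.mp sh_hasDeriv
  have h' : Tendsto (fun t : ℂ => sh t / t) (𝓝[≠] 0) (𝓝 1) := by
    refine h.congr' ?_
    filter_upwards [self_mem_nhdsWithin] with t ht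
    simp [slope, sh_zero, div_eq_inv_mul]
  have := h'.inv₀ one_ne_zero
  simp only [inv_div, inv_one] at this
  exact this

lemma key_tendsto (c : ℂ) :
    Tendsto (fun φ : ℂ => (φ - c) / sh (c - φ)) (𝓝[≠] c) (𝓝 (-1)) := by
  have hmap : Tendsto (fun φ : ℂ => c - φ) (𝓝[≠] c) (𝓝[≠] 0) := by
    apply tendsto_nhdsWithin_of_tendsto_nhds_of_eventually_within
    · have : Tendsto (fun φ : ℂ => c - φ) (𝓝 c) (𝓝 (c - c)) :=
        tendsto_const_nhds.sub tendsto_id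
      simpa using this.mono_left nhdsWithin_le_nhds
    · filter_upwards [self_mem_nhdsWithin] with φ hφ
      simpa [Set.mem_compl_iff, sub_ne_zero] using fun h => hφ h.symm
  have := (div_sh_tendsto.comp hmap).neg
  refine this.congr' ?_ |>.mono_right (by norm_num)
  filter_upwards with φ
  simp only [Function.comp_apply]
  rw [← neg_div, neg_sub]

lemma cancel_aux (A B C a b c d X : ℂ) (hA : A ≠ 0) (hB : B ≠ 0) (hC : C ≠ 0)
    (ha : a ≠ 0) (hb : b ≠ 0) (hc : c ≠ 0) (hd : d ≠ 0) :
    A * B * C * X * a * b * c * d * A⁻¹ * B⁻¹ * C⁻¹ * a⁻¹ * b⁻¹ * c⁻¹ * d⁻¹ = X := by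
  field_simp

/-- The JK residue of the one-leg one-box framing node contribution at the pole
`φ = a - ε₃`, times `-P`, equals `sh(b-a+ε₃)/sh(ε₃)`: the level-one coefficient of the
one-leg PT4 vertex. -/
theorem PT4_one_leg_level_one (ε₁ ε₂ ε₃ ε₄ a b : ℂ)
    (hsum : ε₁ + ε₂ + ε₃ + ε₄ = 0)
    (h1 : sh ε₁ ≠ 0) (h2 : sh ε₂ ≠ 0) (h3 : sh ε₃ ≠ 0) (h4 : sh ε₄ ≠ 0)
    (h31 : sh (ε₃ + ε₁) ≠ 0) (h32 : sh (ε₃ + ε₂) ≠ 0) (h34 : sh (ε₃ + ε₄) ≠ 0) :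
    Tendsto (fun φ : ℂ =>
        -pref ε₁ ε₂ ε₃ ε₄ *
          ((φ - (a - ε₃)) *
            (sh (b - φ) / sh (a - ε₃ - φ) *
              (sh (φ - a + ε₃ + ε₁) / sh (φ - a - ε₁) *
                (sh (φ - a + ε₃ + ε₂) / sh (φ - a - ε₂)) *
                (sh (φ - a + ε₃ + ε₄) / sh (φ - a - ε₄))))))
      (𝓝[≠] (a - ε₃)) (𝓝 (sh (b - a + ε₃) / sh ε₃)) := by
  set c := a - ε₃ with hc
  -- nonvanishing of the denominators at the pole
  have hn1 : sh (c - a - ε₁) ≠ 0 := by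
    have : c - a - ε₁ = -(ε₃ + ε₁) := by rw [hc]; ring
    rw [this, sh_neg]; exact neg_ne_zero.mpr h31
  have hn2 : sh (c - a - ε₂) ≠ 0 := by
    have : c - a - ε₂ = -(ε₃ + ε₂) := by rw [hc]; ring
    rw [this, sh_neg]; exact neg_ne_zero.mpr h32
  have hn4 : sh (c - a - ε₄) ≠ 0 := by
    have : c - a - ε₄ = -(ε₃ + ε₄) := by rw [hc]; ring
    rw [this, sh_neg]; exact neg_ne_zero.mpr h34
  -- the continuous part
  have hcontA : Tendsto (fun φ : ℂ =>
      -pref ε₁ ε₂ ε₃ ε₄ * (sh (b - φ) *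
        (sh (φ - a + ε₃ + ε₁) / sh (φ - a - ε₁) *
          (sh (φ - a + ε₃ + ε₂) / sh (φ - a - ε₂)) *
          (sh (φ - a + ε₃ + ε₄) / sh (φ - a - ε₄)))))
      (𝓝 c)
      (𝓝 (-pref ε₁ ε₂ ε₃ ε₄ * (sh (b - c) *
        (sh (c - a + ε₃ + ε₁) / sh (c - a - ε₁) *
          (sh (c - a + ε₃ + ε₂) / sh (c - a - ε₂)) *
          (sh (c - a + ε₃ + ε₄) / sh (c - a - ε₄)))))) := by
    apply ContinuousAt.tendsto
    fun_prop (disch := assumption)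
  have hmain := (key_tendsto c).mul (hcontA.mono_left nhdsWithin_le_nhds)
  have heq : (fun φ : ℂ =>
      (φ - c) / sh (c - φ) *
        (-pref ε₁ ε₂ ε₃ ε₄ * (sh (b - φ) *
          (sh (φ - a + ε₃ + ε₁) / sh (φ - a - ε₁) *
            (sh (φ - a + ε₃ + ε₂) / sh (φ - a - ε₂)) *
            (sh (φ - a + ε₃ + ε₄) / sh (φ - a - ε₄)))))) =
      (fun φ : ℂ =>
        -pref ε₁ ε₂ ε₃ ε₄ *
          ((φ - (a - ε₃)) *
            (sh (b - φ) / sh (a - ε₃ - φ) *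
              (sh (φ - a + ε₃ + ε₁) / sh (φ - a - ε₁) *
                (sh (φ - a + ε₃ + ε₂) / sh (φ - a - ε₂)) *
                (sh (φ - a + ε₃ + ε₄) / sh (φ - a - ε₄)))))) := by
    funext φ
    rw [← hc]
    field_simp
  rw [heq] at hmain
  convert hmain using 2
  -- value computation
  have e1 : c - a + ε₃ + ε₁ = ε₁ := by rw [hc]; ring
  have e2 : c - a + ε₃ + ε₂ = ε₂ := by rw [hc]; ring
  have e4 : c - a + ε₃ + ε₄ = ε₄ := by rw [hc]; ring
  have d1 : c - a - ε₁ = -(ε₃ + ε₁) := by rw [hc]; ring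
  have d2 : c - a - ε₂ = -(ε₃ + ε₂) := by rw [hc]; ring
  have d4 : c - a - ε₄ = -(ε₃ + ε₄) := by rw [hc]; ring
  have eb : b - c = b - a + ε₃ := by rw [hc]; ring
  have p1 : -ε₁ - ε₄ = ε₃ + ε₂ := by linear_combination -hsum
  have p2 : -ε₂ - ε₄ = ε₃ + ε₁ := by linear_combination -hsum
  have p3 : -ε₃ - ε₄ = -(ε₃ + ε₄) + 0 := by linear_combination -hsum + hsum
  rw [e1, e2, e4, d1, d2, d4, eb]
  unfold pref
  rw [p1, p2]
  have p3' : sh (-ε₃ - ε₄) = -sh (ε₃ + ε₄) := by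
    have : -ε₃ - ε₄ = -(ε₃ + ε₄) := by ring
    rw [this, sh_neg]
  rw [p3', sh_neg, sh_neg, sh_neg, sh_neg, sh_neg, sh_neg, sh_neg]
  field_simp
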